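/- Let f : ℝⁿ → ℝ and G : ℝⁿ → S^m be twice continuously differentiable. Suppose (x,Λ) ∈ ℝⁿ × S^m is a KKT pair of (P1) satisfying strict complementarity (rank G(x) + rank Λ = m), nondegeneracy, and the SONC-SDP inequality: ⟨(∇²ₓL(x,Λ) + H(x,Λ))d, d⟩ ≥ 0 for all d in the critical cone C(x). Then there exists Y ∈ S^m (one may take Y = √G(x)) such that (x,Y,Λ) is a KKT triple of (P2) satisfying LICQ and SONC-NLP. -/

import Mathlib

open Matrix

noncomputable section

def jmul {m : ℕ} (A B : Matrix (Fin m) (Fin m) ℝ) : Matrix (Fin m) (Fin m) ℝ :=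
  (1 / 2 : ℝ) • (A * B + B * A)

def minner {m : ℕ} (A B : Matrix (Fin m) (Fin m) ℝ) : ℝ :=
  (A * B).trace

def memPhi {m : ℕ} (Λ Y : Matrix (Fin m) (Fin m) ℝ) : Prop :=
  ∀ W : Matrix (Fin m) (Fin m) ℝ, W.IsSymm → W ≠ 0 → jmul Y W = 0 →
    0 < minner (jmul W W) Λ

def pderivG {n m : ℕ} (G : (Fin n → ℝ) → Matrix (Fin m) (Fin m) ℝ)
    (x : Fin n → ℝ) (k : Fin n) : Matrix (Fin m) (Fin m) ℝ :=
  Matrix.of fun i j => fderiv ℝ (fun y => G y i j) x (Pi.single k 1)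

def dirDerivG {n m : ℕ} (G : (Fin n → ℝ) → Matrix (Fin m) (Fin m) ℝ)
    (x v : Fin n → ℝ) : Matrix (Fin m) (Fin m) ℝ :=
  ∑ k, v k • pderivG G x k

def adjDG {n m : ℕ} (G : (Fin n → ℝ) → Matrix (Fin m) (Fin m) ℝ)
    (x : Fin n → ℝ) (W : Matrix (Fin m) (Fin m) ℝ) : Fin n → ℝ :=
  fun k => minner (pderivG G x k) W

def gradf {n : ℕ} (f : (Fin n → ℝ) → ℝ) (x : Fin n → ℝ) : Fin n → ℝ :=
  fun k => fderiv ℝ f x (Pi.single k 1)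

def KKT1 {n m : ℕ} (f : (Fin n → ℝ) → ℝ) (G : (Fin n → ℝ) → Matrix (Fin m) (Fin m) ℝ)
    (x : Fin n → ℝ) (Λ : Matrix (Fin m) (Fin m) ℝ) : Prop :=
  gradf f x = adjDG G x Λ ∧ Λ.PosSemidef ∧ (G x).PosSemidef ∧ jmul Λ (G x) = 0

def KKT2 {n m : ℕ} (f : (Fin n → ℝ) → ℝ) (G : (Fin n → ℝ) → Matrix (Fin m) (Fin m) ℝ)
    (x : Fin n → ℝ) (Y Λ : Matrix (Fin m) (Fin m) ℝ) : Prop :=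
  gradf f x = adjDG G x Λ ∧ jmul Λ Y = 0 ∧ G x = jmul Y Y

def hessQ {n m : ℕ} (f : (Fin n → ℝ) → ℝ) (G : (Fin n → ℝ) → Matrix (Fin m) (Fin m) ℝ)
    (Λ : Matrix (Fin m) (Fin m) ℝ) (x v : Fin n → ℝ) : ℝ :=
  iteratedFDeriv ℝ 2 (fun y => f y - minner (G y) Λ) x ![v, v]

def SOSCNLP {n m : ℕ} (f : (Fin n → ℝ) → ℝ) (G : (Fin n → ℝ) → Matrix (Fin m) (Fin m) ℝ)
    (x : Fin n → ℝ) (Y Λ : Matrix (Fin m) (Fin m) ℝ) : Prop :=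
  ∀ (v : Fin n → ℝ) (W : Matrix (Fin m) (Fin m) ℝ), W.IsSymm →
    ¬(v = 0 ∧ W = 0) → dirDerivG G x v = (2 : ℝ) • jmul Y W →
    0 < hessQ f G Λ x v + 2 * minner (jmul W W) Λ

def SONCNLP {n m : ℕ} (f : (Fin n → ℝ) → ℝ) (G : (Fin n → ℝ) → Matrix (Fin m) (Fin m) ℝ)
    (x : Fin n → ℝ) (Y Λ : Matrix (Fin m) (Fin m) ℝ) : Prop :=
  ∀ (v : Fin n → ℝ) (W : Matrix (Fin m) (Fin m) ℝ), W.IsSymm →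
    dirDerivG G x v = (2 : ℝ) • jmul Y W →
    0 ≤ hessQ f G Λ x v + 2 * minner (jmul W W) Λ

def LICQ {n m : ℕ} (G : (Fin n → ℝ) → Matrix (Fin m) (Fin m) ℝ)
    (x : Fin n → ℝ) (Y : Matrix (Fin m) (Fin m) ℝ) : Prop :=
  ∀ W : Matrix (Fin m) (Fin m) ℝ, W.IsSymm → jmul Y W = 0 → adjDG G x W = 0 → W = 0

def Nondeg {n m : ℕ} (G : (Fin n → ℝ) → Matrix (Fin m) (Fin m) ℝ)
    (x : Fin n → ℝ) : Prop :=
  ∀ W : Matrix (Fin m) (Fin m) ℝ, W.IsSymm → G x * W = 0 → adjDG G x W = 0 → W = 0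

def CritCone {n m : ℕ} (f : (Fin n → ℝ) → ℝ) (G : (Fin n → ℝ) → Matrix (Fin m) (Fin m) ℝ)
    (x : Fin n → ℝ) : Set (Fin n → ℝ) :=
  {d | (∀ u : Fin m → ℝ, G x *ᵥ u = 0 → 0 ≤ u ⬝ᵥ (dirDerivG G x d *ᵥ u)) ∧
    gradf f x ⬝ᵥ d = 0}

def IsMPInv {m : ℕ} (A P : Matrix (Fin m) (Fin m) ℝ) : Prop :=
  A * P * A = A ∧ P * A * P = P ∧ (A * P)ᵀ = A * P ∧ (P * A)ᵀ = P * A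

def Hmat {n m : ℕ} (G : (Fin n → ℝ) → Matrix (Fin m) (Fin m) ℝ)
    (x : Fin n → ℝ) (Λ P : Matrix (Fin m) (Fin m) ℝ) : Matrix (Fin n) (Fin n) ℝ :=
  Matrix.of fun i j => 2 * (pderivG G x i * P * pderivG G x j * Λ).trace

/-!
Take `Y = √G(x)`. For positive semidefinite `A` and Hermitian `W`, `A W + W A = 0` forces
`A W = 0` (the trace of the positive semidefinite `W A W` vanishes); this turns complementarity
into `G(x) Λ = 0`, hence `Y Λ = 0`, and turns `Y ∘ W = 0` into `G(x) W = 0`, so LICQ follows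
from nondegeneracy. For SONC-NLP, a pair `(v, W)` with `DG(x) v = 2 Y ∘ W` makes `v` critical,
and with `P = G(x)†` the curvature term is `⟨H v, v⟩ = 2 tr (W (Y P Y) W Λ)`. Since `Y P Y` is
an orthogonal projection, this is at most `2 ⟨W ∘ W, Λ⟩`.
-/

lemma IsSelfAdjoint.isStarProjection_mul_mul {R : Type*} [Monoid R] [StarMul R] {Y P : R}
    (hY : IsSelfAdjoint Y) (hP : IsSelfAdjoint P) (hPYYP : P * (Y * Y) * P = P) :
    IsStarProjection (Y * P * Y) where
  isIdempotentElem := by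
    rw [IsIdempotentElem]
    conv_rhs => rw [← hPYYP]
    simp only [mul_assoc]
  isSelfAdjoint := by simpa only [hY.star_eq] using hP.conjugate Y

namespace Matrix

variable {ι : Type*} [Fintype ι]

lemma trace_add_mul_mul_add_mul_of_mul_eq_zero {R : Type*} [CommRing R] {Y Λ : Matrix ι ι R}
    (hΛY : Λ * Y = 0) (hYΛ : Y * Λ = 0) (W P : Matrix ι ι R) :
    ((Y * W + W * Y) * P * (Y * W + W * Y) * Λ).trace = (W * (Y * P * Y) * W * Λ).trace := by
  have hexpand : (Y * W + W * Y) * P * (Y * W + W * Y) * Λ =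
      Y * (W * P * Y * W * Λ) + W * (Y * P * Y) * W * Λ + (Y * W + W * Y) * P * W * (Y * Λ) := by
    noncomm_ring
  rw [hexpand, hYΛ, mul_zero, add_zero, trace_add, trace_mul_comm Y]
  simp only [mul_assoc, hΛY, mul_zero, trace_zero, zero_add]

variable [DecidableEq ι]

lemma IsHermitian.exists_isHermitian_pseudoinverse {A : Matrix ι ι ℝ} (hA : A.IsHermitian) :
    ∃ P : Matrix ι ι ℝ, P.IsHermitian ∧ A * P * A = A ∧ P * A * P = P ∧ (A * P).IsHermitian ∧
      (P * A).IsHermitian := by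
  have hcfc_mul (f g : ℝ → ℝ) : cfc f A * cfc g A = cfc (fun x => f x * g x) A :=
    (cfc_mul f g A (A.finite_real_spectrum.continuousOn f)
      (A.finite_real_spectrum.continuousOn g)).symm
  have hid : cfc (fun x : ℝ => x) A = A := cfc_id' ℝ A hA.isSelfAdjoint
  refine ⟨cfc (·⁻¹ : ℝ → ℝ) A, IsSelfAdjoint.cfc.isHermitian, ?_, ?_, ?_, ?_⟩
  · calc A * cfc (·⁻¹) A * A = cfc (fun x : ℝ => x) A * cfc (·⁻¹) A * cfc (fun x : ℝ => x) A := by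
          rw [hid]
      _ = A := by rw [hcfc_mul, hcfc_mul]; simp only [mul_inv_mul_cancel, hid]
  · calc cfc (·⁻¹) A * A * cfc (·⁻¹) A =
          cfc (·⁻¹) A * cfc (fun x : ℝ => x) A * cfc (·⁻¹) A := by rw [hid]
      _ = cfc (·⁻¹) A := by
        rw [hcfc_mul, hcfc_mul]
        congr 1 with x
        simpa only [inv_inv] using mul_inv_mul_cancel x⁻¹
  · nth_rewrite 1 [← hid]
    rw [hcfc_mul]
    exact IsSelfAdjoint.cfc.isHermitian
  · nth_rewrite 2 [← hid]
    rw [hcfc_mul]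
    exact IsSelfAdjoint.cfc.isHermitian

variable {𝕜 : Type*} [RCLike 𝕜]

open scoped MatrixOrder ComplexOrder

lemma PosSemidef.exists_posSemidef_mul_self_eq {A : Matrix ι ι 𝕜} (hA : A.PosSemidef) :
    ∃ Y : Matrix ι ι 𝕜, Y.PosSemidef ∧ Y * Y = A :=
  ⟨CFC.sqrt A, nonneg_iff_posSemidef.mp (CFC.sqrt_nonneg A), CFC.sqrt_mul_sqrt_self A hA.nonneg⟩

lemma PosSemidef.mul_eq_zero_iff_conjTranspose_mul_mul_eq_zero {A : Matrix ι ι 𝕜}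
    (hA : A.PosSemidef) (B : Matrix ι ι 𝕜) : A * B = 0 ↔ Bᴴ * A * B = 0 := by
  obtain ⟨S, hS, rfl⟩ := hA.exists_posSemidef_mul_self_eq
  nth_rewrite 1 [← hS.1.eq]
  rw [conjTranspose_mul_self_mul_eq_zero, ← conjTranspose_mul_self_eq_zero, conjTranspose_mul,
    hS.1.eq]
  simp only [mul_assoc]

lemma PosSemidef.mul_eq_zero_of_mul_add_mul_eq_zero {A W : Matrix ι ι 𝕜} (hA : A.PosSemidef)
    (hW : W.IsHermitian) (h : A * W + W * A = 0) : A * W = 0 := by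
  have hWA : W * A = -(A * W) := eq_neg_of_add_eq_zero_right h
  -- `W A W` is positive semidefinite, and anticommutation makes its trace vanish
  have htrace : (W * A * W).trace = 0 := by
    have : (W * A * W).trace = -(W * A * W).trace := by
      conv_lhs => rw [trace_mul_comm, hWA, mul_neg, trace_neg, ← mul_assoc]
    exact self_eq_neg.mp this
  rw [hA.mul_eq_zero_iff_conjTranspose_mul_mul_eq_zero,
    ← (hA.conjTranspose_mul_mul_same W).trace_eq_zero_iff, hW.eq, htrace]

lemma PosSemidef.trace_mul_nonneg {A B : Matrix ι ι 𝕜} (hA : A.PosSemidef) (hB : B.PosSemidef) :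
    0 ≤ (A * B).trace := by
  obtain ⟨S, hS, rfl⟩ := hA.exists_posSemidef_mul_self_eq
  have h := (hB.conjTranspose_mul_mul_same S).trace_nonneg
  rwa [hS.1.eq, trace_mul_cycle] at h

lemma trace_mul_mul_mul_le_of_isStarProjection {Q W Λ : Matrix ι ι 𝕜} (hQ : IsStarProjection Q)
    (hW : W.IsHermitian) (hΛ : Λ.PosSemidef) : (W * Q * W * Λ).trace ≤ (W * W * Λ).trace := by
  have hWΛW : (W * Λ * W).PosSemidef := by
    simpa only [hW.eq] using hΛ.conjTranspose_mul_mul_same W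
  have h := (nonneg_iff_posSemidef.mp hQ.one_sub_nonneg).trace_mul_nonneg hWΛW
  rw [sub_mul, one_mul, trace_sub, sub_nonneg, trace_mul_cycle, ← mul_assoc, ← mul_assoc,
    trace_mul_cycle] at h
  simpa only [mul_assoc] using h

end Matrix

section JordanProduct

variable {m : ℕ} (A B : Matrix (Fin m) (Fin m) ℝ)

lemma two_smul_jmul : (2 : ℝ) • jmul A B = A * B + B * A := by
  rw [jmul, smul_smul]
  norm_num

lemma jmul_eq_zero_iff : jmul A B = 0 ↔ A * B + B * A = 0 := by
  rw [← two_smul_jmul, smul_eq_zero]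
  norm_num

lemma jmul_self : jmul A A = A * A := by
  rw [jmul, ← two_smul ℝ, smul_smul]
  norm_num

end JordanProduct

section Derivatives

variable {n m : ℕ} (G : (Fin n → ℝ) → Matrix (Fin m) (Fin m) ℝ) (x : Fin n → ℝ)

lemma adjDG_dotProduct (W : Matrix (Fin m) (Fin m) ℝ) (v : Fin n → ℝ) :
    adjDG G x W ⬝ᵥ v = (dirDerivG G x v * W).trace := by
  simp [adjDG, dirDerivG, minner, Finset.sum_mul, trace_sum, dotProduct, mul_comm]

lemma dotProduct_Hmat_mulVec (Λ P : Matrix (Fin m) (Fin m) ℝ) (v : Fin n → ℝ) :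
    v ⬝ᵥ (Hmat G x Λ P *ᵥ v) = 2 * (dirDerivG G x v * P * dirDerivG G x v * Λ).trace := by
  simp only [dirDerivG, Finset.sum_mul, Finset.mul_sum, smul_mul_assoc, mul_smul_comm, trace_sum,
    trace_smul, dotProduct, mulVec, Hmat, of_apply, smul_eq_mul]
  rw [Finset.sum_comm]
  refine Finset.sum_congr rfl fun i _ => Finset.sum_congr rfl fun j _ => by ring

end Derivatives

section SquaredSlack

variable {n m : ℕ} {f : (Fin n → ℝ) → ℝ} {G : (Fin n → ℝ) → Matrix (Fin m) (Fin m) ℝ}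
  {x : Fin n → ℝ} {Y Λ : Matrix (Fin m) (Fin m) ℝ}

lemma LICQ.of_nondeg (hY : Y.PosSemidef) (hYY : Y * Y = G x) (hnd : Nondeg G x) :
    LICQ G x Y := by
  intro W hW hYW hadj
  have hYW' : Y * W = 0 := hY.mul_eq_zero_of_mul_add_mul_eq_zero
    (isHermitian_iff_isSymm.mpr hW) ((jmul_eq_zero_iff Y W).mp hYW)
  exact hnd W hW (by rw [← hYY, mul_assoc, hYW', mul_zero]) hadj

lemma mem_critCone_of_dirDerivG_eq (hgrad : gradf f x = adjDG G x Λ) (hY : Y.IsHermitian)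
    (hYY : Y * Y = G x) (hΛY : Λ * Y = 0) (hYΛ : Y * Λ = 0) {v : Fin n → ℝ}
    {W : Matrix (Fin m) (Fin m) ℝ} (hv : dirDerivG G x v = Y * W + W * Y) :
    v ∈ CritCone f G x := by
  refine ⟨fun u hu => ?_, ?_⟩
  · have hYu : Y *ᵥ u = 0 := by
      rwa [← conjTranspose_mul_self_mulVec_eq_zero, hY.eq, hYY]
    have huY : u ᵥ* Y = 0 := by rw [← mulVec_transpose, (isHermitian_iff_isSymm.mp hY).eq, hYu]
    rw [hv, add_mulVec, dotProduct_add, ← mulVec_mulVec, ← mulVec_mulVec, hYu, mulVec_zero,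
      dotProduct_zero, dotProduct_mulVec, huY, zero_dotProduct, add_zero]
  · rw [hgrad, adjDG_dotProduct, hv, add_mul, trace_add, trace_mul_comm, mul_assoc W, hYΛ,
      ← mul_assoc, hΛY]
    simp only [zero_mul, mul_zero, trace_zero, add_zero]

lemma SONCNLP.of_sonc (hgrad : gradf f x = adjDG G x Λ) (hΛ : Λ.PosSemidef)
    (hY : Y.IsHermitian) (hYY : Y * Y = G x) (hΛY : Λ * Y = 0) (hYΛ : Y * Λ = 0)
    {P : Matrix (Fin m) (Fin m) ℝ} (hP : P.IsHermitian) (hPGP : P * G x * P = P)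
    (hsonc : ∀ d ∈ CritCone f G x, 0 ≤ hessQ f G Λ x d + d ⬝ᵥ (Hmat G x Λ P *ᵥ d)) :
    SONCNLP f G x Y Λ := by
  intro v W hW hv
  rw [← hYY] at hPGP
  have hv' : dirDerivG G x v = Y * W + W * Y := hv.trans (two_smul_jmul Y W)
  have hsonc_v := hsonc v (mem_critCone_of_dirDerivG_eq hgrad hY hYY hΛY hYΛ hv')
  rw [dotProduct_Hmat_mulVec, hv', trace_add_mul_mul_add_mul_of_mul_eq_zero hΛY hYΛ] at hsonc_v
  have hle := trace_mul_mul_mul_le_of_isStarProjection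
    (hY.isSelfAdjoint.isStarProjection_mul_mul hP.isSelfAdjoint hPGP)
    (isHermitian_iff_isSymm.mpr hW) hΛ
  rw [jmul_self, minner]
  linarith

end SquaredSlack

theorem stmt18_general {n m : ℕ} (f : (Fin n → ℝ) → ℝ) (G : (Fin n → ℝ) → Matrix (Fin m) (Fin m) ℝ)
    (x : Fin n → ℝ) (Λ : Matrix (Fin m) (Fin m) ℝ)
    (hKKT : KKT1 f G x Λ) (hnd : Nondeg G x)
    (hsonc : ∀ P : Matrix (Fin m) (Fin m) ℝ, IsMPInv (G x) P →
      ∀ d ∈ CritCone f G x,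
        0 ≤ hessQ f G Λ x d + d ⬝ᵥ (Hmat G x Λ P *ᵥ d)) :
    ∃ Y : Matrix (Fin m) (Fin m) ℝ, Y.IsSymm ∧ KKT2 f G x Y Λ ∧
      LICQ G x Y ∧ SONCNLP f G x Y Λ := by
  obtain ⟨hgrad, hΛ, hG, hcomp⟩ := hKKT
  obtain ⟨Y, hY, hYY⟩ := hG.exists_posSemidef_mul_self_eq
  have hGΛ : G x * Λ = 0 := hG.mul_eq_zero_of_mul_add_mul_eq_zero hΛ.1
    (by rw [add_comm]; exact (jmul_eq_zero_iff Λ (G x)).mp hcomp)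
  have hYΛ : Y * Λ = 0 := by
    rwa [← conjTranspose_mul_self_mul_eq_zero, hY.1.eq, hYY]
  have hΛY : Λ * Y = 0 := by
    simpa only [conjTranspose_mul, hY.1.eq, hΛ.1.eq, conjTranspose_zero] using congrArg (·ᴴ) hYΛ
  obtain ⟨P, hP, hGPG, hPGP, hGP, hPG⟩ := hG.1.exists_isHermitian_pseudoinverse
  refine ⟨Y, isHermitian_iff_isSymm.mp hY.1, ⟨hgrad, ?_, (jmul_self Y).trans hYY |>.symm⟩,
    .of_nondeg hY hYY hnd, .of_sonc hgrad hΛ hY.1 hYY hΛY hYΛ hP hPGP (hsonc P ?_)⟩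
  · rw [jmul_eq_zero_iff, hΛY, hYΛ, add_zero]
  · exact ⟨hGPG, hPGP, hGP.eq, hPG.eq⟩

theorem stmt18 {n m : ℕ} (f : (Fin n → ℝ) → ℝ) (G : (Fin n → ℝ) → Matrix (Fin m) (Fin m) ℝ)
    (hf : ContDiff ℝ 2 f) (hG : ∀ i j, ContDiff ℝ 2 fun y => G y i j)
    (x : Fin n → ℝ) (Λ : Matrix (Fin m) (Fin m) ℝ)
    (hKKT : KKT1 f G x Λ) (hsc : (G x).rank + Λ.rank = m) (hnd : Nondeg G x)
    (hsonc : ∀ P : Matrix (Fin m) (Fin m) ℝ, IsMPInv (G x) P →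
      ∀ d ∈ CritCone f G x,
        0 ≤ hessQ f G Λ x d + d ⬝ᵥ (Hmat G x Λ P *ᵥ d)) :
    ∃ Y : Matrix (Fin m) (Fin m) ℝ, Y.IsSymm ∧ KKT2 f G x Y Λ ∧
      LICQ G x Y ∧ SONCNLP f G x Y Λ :=
  stmt18_general f G x Λ hKKT hnd hsonc
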